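/- arXiv:1705.08553 — 2 statements merged into one kernel-verified Lean document; each statement's English description precedes it below -/
import Mathlib

section
/- Product property of the conditional expectations: let Λ ⊆ Γ be finite, X ⊆ Λ, and let Z, Y ⊆ Λ with Z ∩ Y = ∅. Then for all A ∈ 𝔄_Z⁺ and B ∈ 𝔄_Y⁺: 𝔼_X^Λ(AB) = 𝔼_{X∪Y}^Λ(A) · 𝔼_{X∪Y^c}^Λ(B) = 𝔼_{X∪Z^c}^Λ(A) · 𝔼_{X∪Z}^Λ(B), where Y^c = Λ∖Y and Z^c = Λ∖Z. -/
open scoped Classical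

/-- The canonical anticommutation relations for a family `a x` of annihilation
operators in a C*-algebra. -/
def IsCAR {Γ A : Type*} [Ring A] [StarRing A] (a : Γ → A) : Prop :=
  (∀ x y, a x * a y + a y * a x = 0) ∧
  (∀ x y, star (a x) * star (a y) + star (a y) * star (a x) = 0) ∧
  (∀ x y, a x * star (a y) + star (a y) * a x = if x = y then (1 : A) else 0)

/-- The four possible factors of a monomial at a site `x`:
`1`, `a x`, `a x *`, and `a x * a x`. -/
def carFactor {Γ A : Type*} [Ring A] [StarRing A] (a : Γ → A) (k : Fin 4) (x : Γ) : A :=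
  match k with
  | 0 => 1
  | 1 => a x
  | 2 => star (a x)
  | 3 => star (a x) * a x

/-- The monomial with factor pattern `k` along the enumeration `l` of a finite set of sites. -/
def carMonomial {Γ A : Type*} [Ring A] [StarRing A] (a : Γ → A) (l : List Γ)
    (k : Γ → Fin 4) : A :=
  (l.map fun x => carFactor a (k x) x).prod

/-- The number of odd factors (`a x` or `a x *`) of the monomial with pattern `k` along `l`. -/
def carOddCount {Γ : Type*} (l : List Γ) (k : Γ → Fin 4) : ℕ :=
  l.countP fun x => decide (k x = 1 ∨ k x = 2)

/-- `𝔄_X`: the linear span of the monomials supported in the finite set `X`. -/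
def carSpan {Γ A : Type*} [Ring A] [StarRing A] [Algebra ℂ A] (a : Γ → A) (X : Finset Γ) :
    Submodule ℂ A :=
  Submodule.span ℂ {m | ∃ (l : List Γ) (k : Γ → Fin 4),
    l.Nodup ∧ l.toFinset = X ∧ m = carMonomial a l k}

/-- `𝔄_X⁺`: the linear span of the even monomials supported in the finite set `X`. -/
def carSpanEven {Γ A : Type*} [Ring A] [StarRing A] [Algebra ℂ A] (a : Γ → A) (X : Finset Γ) :
    Submodule ℂ A :=
  Submodule.span ℂ {m | ∃ (l : List Γ) (k : Γ → Fin 4),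
    l.Nodup ∧ l.toFinset = X ∧ Even (carOddCount l k) ∧ m = carMonomial a l k}

/-- The single-site unitaries `u_x^(0) = 1`, `u_x^(1) = a_x* + a_x`, `u_x^(2) = a_x* − a_x`,
`u_x^(3) = 1 − 2 a_x* a_x`. -/
def uFactor {Γ A : Type*} [Ring A] [StarRing A] (a : Γ → A) (k : Fin 4) (x : Γ) : A :=
  match k with
  | 0 => 1
  | 1 => star (a x) + a x
  | 2 => star (a x) - a x
  | 3 => 1 - 2 * (star (a x) * a x)

/-- The unitary `u(α) = u_{x_1}^{(α(x_1))} ⋯ u_{x_n}^{(α(x_n))}` along the enumeration `l`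
of `Λ ∖ X`. -/
def uProd {Γ A : Type*} [Ring A] [StarRing A] (a : Γ → A) (l : List Γ)
    (α : Fin l.length → Fin 4) : A :=
  (List.ofFn fun i => uFactor a (α i) (l.get i)).prod

/-- The conditional expectation `𝔼_X^Λ(B) = 4^{−|Λ∖X|} ∑_{α} u(α)* B u(α)`, where `l` is
an enumeration of `Λ ∖ X`. -/
noncomputable def condExp {Γ A : Type*} [Ring A] [StarRing A] [Algebra ℂ A] (a : Γ → A)
    (l : List Γ) (B : A) : A :=
  ((4 : ℂ) ^ l.length)⁻¹ • ∑ α : Fin l.length → Fin 4, star (uProd a l α) * B * uProd a l α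

/-!
The average over the unitaries `u(α)` is the composite of the one-site averages
`T_x C = ¼ ∑ₖ (u_x^(k))* C u_x^(k)` over the sites `x ∈ Λ ∖ X`. Unitaries at distinct sites
commute or anticommute and each is self-adjoint up to sign, so the `T_x` commute with each other
and `𝔼_X^Λ` does not depend on the enumeration of `Λ ∖ X`. An even element supported in `Y`
commutes with `a_x` and `a_x*` for every `x ∉ Y`, so `T_x` is a bimodule map over it and
preserves commutation with the generators of the other sites. Splitting `Λ ∖ X` into the sites
outside `Y` and those in `Y` (which lie outside `Z`), the first averages pass through `B` and the
second through `A` and through the averaged `A`; splitting along `Z` instead gives the other form.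
-/

def AntiCommute {R : Type*} [Mul R] [Neg R] (p q : R) : Prop := p * q = -(q * p)

namespace AntiCommute

variable {R : Type*} [NonUnitalRing R] {p q r : R}

protected theorem eq (h : AntiCommute p q) : p * q = -(q * p) := h

protected theorem symm (h : AntiCommute p q) : AntiCommute q p := by
  rw [AntiCommute, h.eq, neg_neg]

theorem add_left (hp : AntiCommute p r) (hq : AntiCommute q r) : AntiCommute (p + q) r := by
  rw [AntiCommute, add_mul, mul_add, hp.eq, hq.eq, neg_add]

theorem sub_left (hp : AntiCommute p r) (hq : AntiCommute q r) : AntiCommute (p - q) r := by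
  rw [AntiCommute, sub_mul, mul_sub, hp.eq, hq.eq, neg_sub_neg, neg_sub]

theorem add_right (hq : AntiCommute p q) (hr : AntiCommute p r) : AntiCommute p (q + r) :=
  (hq.symm.add_left hr.symm).symm

theorem sub_right (hq : AntiCommute p q) (hr : AntiCommute p r) : AntiCommute p (q - r) :=
  (hq.symm.sub_left hr.symm).symm

theorem commute_mul_left (hp : AntiCommute p r) (hq : AntiCommute q r) : Commute (p * q) r := by
  rw [Commute, SemiconjBy, mul_assoc, hq.eq, mul_neg, ← mul_assoc, hp.eq, neg_mul, neg_neg,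
    mul_assoc]

theorem commute_mul_right (hq : AntiCommute p q) (hr : AntiCommute p r) : Commute p (q * r) :=
  (hq.symm.commute_mul_left hr.symm).symm

theorem star_star [StarRing R] (h : AntiCommute p q) : AntiCommute (star q) (star p) := by
  rw [AntiCommute, ← star_mul, h.eq, star_neg, star_mul]

end AntiCommute

section StarConjugation

variable {R : Type*} [Ring R] [StarRing R] {u v w C : R}

theorem commute_star_mul_mul (hw : Commute w v ∨ AntiCommute w v)
    (hv : star v = v ∨ star v = -v) (hC : Commute w C) : Commute w (star v * C * v) := by
  have hvCv : Commute w (v * C * v) := by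
    rcases hw with hw | hw
    · exact (hw.mul_right hC).mul_right hw
    · calc w * (v * C * v) = -(v * (w * C) * v) := by
            rw [← mul_assoc, ← mul_assoc, hw.eq]; noncomm_ring
        _ = -(v * C * (w * v)) := by rw [hC.eq]; noncomm_ring
        _ = v * C * v * w := by rw [hw.eq]; noncomm_ring
  rcases hv with hv | hv <;> rw [hv]
  · exact hvCv
  · simpa only [neg_mul] using hvCv.neg_right

theorem star_mul_star_mul_mul_comm (h : Commute u v ∨ AntiCommute u v) :
    star u * (star v * C * v) * u = star v * (star u * C * u) * v := by
  rcases h with h | h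
  · calc star u * (star v * C * v) * u = star u * star v * C * (v * u) := by noncomm_ring
      _ = star v * star u * C * (u * v) := by rw [h.star_star.eq, h.eq]
      _ = star v * (star u * C * u) * v := by noncomm_ring
  · calc star u * (star v * C * v) * u = star u * star v * C * (v * u) := by noncomm_ring
      _ = -(star v * star u) * C * -(u * v) := by rw [h.star_star.symm.eq, h.symm.eq]
      _ = star v * (star u * C * u) * v := by noncomm_ring

end StarConjugation

section CAR

variable {Γ A : Type*} [Ring A] [StarRing A] {a : Γ → A}

def CommutesAt (a : Γ → A) (x : Γ) (C : A) : Prop :=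
  Commute (a x) C ∧ Commute (star (a x)) C

def AntiCommutesAt (a : Γ → A) (x : Γ) (C : A) : Prop :=
  AntiCommute (a x) C ∧ AntiCommute (star (a x)) C

theorem IsCAR.antiCommute (hCAR : IsCAR a) {x y : Γ} (h : x ≠ y) {g g' : A}
    (hg : g = a x ∨ g = star (a x)) (hg' : g' = a y ∨ g' = star (a y)) : AntiCommute g g' := by
  obtain ⟨haa, hss, has⟩ := hCAR
  refine eq_neg_of_add_eq_zero_left ?_
  rcases hg with rfl | rfl <;> rcases hg' with rfl | rfl
  · exact haa x y
  · simpa [h] using has x y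
  · simpa [h.symm, add_comm] using has y x
  · exact hss x y

theorem CommutesAt.commute_uFactor {x : Γ} {C : A} (hC : CommutesAt a x C) (k : Fin 4) :
    Commute (uFactor a k x) C := by
  obtain ⟨h, hs⟩ := hC
  fin_cases k
  · exact Commute.one_left C
  · exact hs.add_left h
  · exact hs.sub_left h
  · exact (Commute.one_left C).sub_left ((Commute.ofNat_left 2 C).mul_left (hs.mul_left h))

theorem star_uFactor_eq_or (a : Γ → A) (k : Fin 4) (x : Γ) :
    star (uFactor a k x) = uFactor a k x ∨ star (uFactor a k x) = -uFactor a k x := by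
  fin_cases k
  · simp [uFactor]
  · simp [uFactor, add_comm]
  · simp [uFactor]
  · left
    simp only [uFactor, star_sub, star_one, star_mul, star_star, star_ofNat]
    rw [(Commute.ofNat_left 2 (star (a x) * a x)).eq]

theorem CommutesAt.commute_star_uFactor {x : Γ} {C : A} (hC : CommutesAt a x C) (k : Fin 4) :
    Commute (star (uFactor a k x)) C := by
  rcases star_uFactor_eq_or a k x with h | h <;> rw [h]
  · exact hC.commute_uFactor k
  · exact (hC.commute_uFactor k).neg_left

theorem AntiCommutesAt.commute_or_antiCommute_uFactor {x : Γ} {C : A}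
    (hC : AntiCommutesAt a x C) (k : Fin 4) :
    Commute (uFactor a k x) C ∨ AntiCommute (uFactor a k x) C := by
  obtain ⟨h, hs⟩ := hC
  fin_cases k
  · exact .inl (Commute.one_left C)
  · exact .inr (hs.add_left h)
  · exact .inr (hs.sub_left h)
  · exact .inl ((Commute.one_left C).sub_left
      ((Commute.ofNat_left 2 C).mul_left (hs.commute_mul_left h)))

theorem IsCAR.uFactor_commutesAt_or_antiCommutesAt (hCAR : IsCAR a) {x y : Γ} (h : x ≠ y)
    (k : Fin 4) : CommutesAt a y (uFactor a k x) ∨ AntiCommutesAt a y (uFactor a k x) := by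
  have h₁ := hCAR.antiCommute h.symm (.inl rfl) (.inr rfl)
  have h₂ := hCAR.antiCommute h.symm (.inl rfl) (.inl rfl)
  have h₃ := hCAR.antiCommute h.symm (.inr rfl) (.inr rfl)
  have h₄ := hCAR.antiCommute h.symm (.inr rfl) (.inl rfl)
  fin_cases k
  · exact .inl ⟨Commute.one_right _, Commute.one_right _⟩
  · exact .inr ⟨h₁.add_right h₂, h₃.add_right h₄⟩
  · exact .inr ⟨h₁.sub_right h₂, h₃.sub_right h₄⟩
  · exact .inl ⟨(Commute.one_right _).sub_right
      ((Commute.ofNat_right _ 2).mul_right (h₁.commute_mul_right h₂)),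
      (Commute.one_right _).sub_right
      ((Commute.ofNat_right _ 2).mul_right (h₃.commute_mul_right h₄))⟩

theorem IsCAR.uFactor_commute_or_antiCommute (hCAR : IsCAR a) {x y : Γ} (h : x ≠ y)
    (k j : Fin 4) :
    Commute (uFactor a j y) (uFactor a k x) ∨ AntiCommute (uFactor a j y) (uFactor a k x) :=
  (hCAR.uFactor_commutesAt_or_antiCommutesAt h k).elim
    (fun hc => .inl (hc.commute_uFactor j)) (·.commute_or_antiCommute_uFactor j)

theorem IsCAR.antiCommute_carFactor (hCAR : IsCAR a) {x y : Γ} (h : x ≠ y) {g : A}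
    (hg : g = a x ∨ g = star (a x)) {j : Fin 4} (hj : j = 1 ∨ j = 2) :
    AntiCommute g (carFactor a j y) := by
  rcases hj with rfl | rfl
  exacts [hCAR.antiCommute h hg (.inl rfl), hCAR.antiCommute h hg (.inr rfl)]

theorem IsCAR.commute_carFactor (hCAR : IsCAR a) {x y : Γ} (h : x ≠ y) {g : A}
    (hg : g = a x ∨ g = star (a x)) {j : Fin 4} (hj : ¬(j = 1 ∨ j = 2)) :
    Commute g (carFactor a j y) := by
  fin_cases j
  · exact Commute.one_right g
  · exact absurd (.inl rfl) hj
  · exact absurd (.inr rfl) hj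
  · exact (hCAR.antiCommute h hg (.inr rfl)).commute_mul_right (hCAR.antiCommute h hg (.inl rfl))

theorem IsCAR.mul_carMonomial (hCAR : IsCAR a) {x : Γ} {g : A} (hg : g = a x ∨ g = star (a x))
    {l : List Γ} (hx : x ∉ l) (k : Γ → Fin 4) :
    g * carMonomial a l k = (-1 : ℤ) ^ carOddCount l k • (carMonomial a l k * g) := by
  induction l with
  | nil => simp [carMonomial, carOddCount]
  | cons y l ih =>
    have hxy : x ≠ y := List.ne_of_not_mem_cons hx
    have hxl : x ∉ l := List.not_mem_of_not_mem_cons hx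
    have hm : carMonomial a (y :: l) k = carFactor a (k y) y * carMonomial a l k := by
      simp [carMonomial]
    rw [hm, ← mul_assoc]
    by_cases hj : k y = 1 ∨ k y = 2
    · have hcount : carOddCount (y :: l) k = carOddCount l k + 1 := by
        simp [carOddCount, hj]
      rw [(hCAR.antiCommute_carFactor hxy hg hj).eq, neg_mul, mul_assoc, ih hxl,
        hcount, pow_succ, mul_smul, neg_one_smul, smul_neg, mul_smul_comm, ← mul_assoc]
    · have hcount : carOddCount (y :: l) k = carOddCount l k := by
        simp [carOddCount, hj]
      rw [(hCAR.commute_carFactor hxy hg hj).eq, mul_assoc, ih hxl, hcount,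
        mul_smul_comm, mul_assoc]

theorem IsCAR.commutesAt_of_mem_carSpanEven [Algebra ℂ A] (hCAR : IsCAR a) {Y : Finset Γ}
    {x : Γ} (hx : x ∉ Y) {C : A} (hC : C ∈ carSpanEven a Y) : CommutesAt a x C := by
  induction hC using Submodule.span_induction with
  | mem m hm =>
    obtain ⟨l, k, -, rfl, heven, rfl⟩ := hm
    have hxl : x ∉ l := fun hl => hx (List.mem_toFinset.mpr hl)
    have hsign := heven.neg_one_pow (α := ℤ)
    constructor <;> rw [Commute, SemiconjBy]
    · simpa [hsign] using hCAR.mul_carMonomial (.inl rfl) hxl k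
    · simpa [hsign] using hCAR.mul_carMonomial (.inr rfl) hxl k
  | zero => exact ⟨Commute.zero_right _, Commute.zero_right _⟩
  | add _ _ _ _ hu hv => exact ⟨hu.1.add_right hv.1, hu.2.add_right hv.2⟩
  | smul c _ _ hu => exact ⟨hu.1.smul_right c, hu.2.smul_right c⟩

end CAR

section Averaging

variable {Γ A : Type*} [Ring A] [StarRing A] [Algebra ℂ A] {a : Γ → A}

noncomputable def siteAvg (a : Γ → A) (x : Γ) (C : A) : A :=
  (4 : ℂ)⁻¹ • ∑ k : Fin 4, star (uFactor a k x) * C * uFactor a k x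

theorem condExp_nil (B : A) : condExp a [] B = B := by
  simp [condExp, uProd]

theorem condExp_cons (x : Γ) (l : List Γ) (B : A) :
    condExp a (x :: l) B = condExp a l (siteAvg a x B) := by
  have huProd (α : Fin (l.length + 1) → Fin 4) :
      uProd a (x :: l) α = uFactor a (α 0) x * uProd a l (Fin.tail α) := by
    simp [uProd, List.ofFn_succ, Fin.tail]
  change ((4 : ℂ) ^ (l.length + 1))⁻¹ • ∑ α : Fin (l.length + 1) → Fin 4,
    star (uProd a (x :: l) α) * B * uProd a (x :: l) α = _
  rw [← (Fin.consEquiv fun _ ↦ Fin 4).sum_comp, Fintype.sum_prod_type, Finset.sum_comm,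
    condExp, siteAvg]
  simp only [Finset.mul_sum, Finset.sum_mul, mul_smul_comm, smul_mul_assoc, Finset.smul_sum,
    smul_smul, pow_succ, mul_inv, huProd, star_mul]
  refine Finset.sum_congr rfl fun β _ ↦ Finset.sum_congr rfl fun k _ ↦ ?_
  simp only [Fin.consEquiv, Equiv.coe_fn_mk, Fin.cons_zero, Fin.tail_cons]
  noncomm_ring

theorem condExp_append (l₁ l₂ : List Γ) (B : A) :
    condExp a (l₁ ++ l₂) B = condExp a l₂ (condExp a l₁ B) := by
  induction l₁ generalizing B with
  | nil => rw [List.nil_append, condExp_nil]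
  | cons x l ih => rw [List.cons_append, condExp_cons, condExp_cons, ih]

theorem siteAvg_mul_right {x : Γ} {B : A} (hB : CommutesAt a x B) (C : A) :
    siteAvg a x (C * B) = siteAvg a x C * B := by
  simp only [siteAvg, smul_mul_assoc, Finset.sum_mul]
  refine congrArg _ (Finset.sum_congr rfl fun k _ ↦ ?_)
  simp only [mul_assoc, ← (hB.commute_uFactor k).eq]

theorem siteAvg_mul_left {x : Γ} {D : A} (hD : CommutesAt a x D) (C : A) :
    siteAvg a x (D * C) = D * siteAvg a x C := by
  simp only [siteAvg, mul_smul_comm, Finset.mul_sum]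
  refine congrArg _ (Finset.sum_congr rfl fun k _ ↦ ?_)
  simp only [← mul_assoc, (hD.commute_star_uFactor k).eq]

theorem commute_siteAvg {x : Γ} {w C : A}
    (hw : ∀ k, Commute w (uFactor a k x) ∨ AntiCommute w (uFactor a k x)) (hC : Commute w C) :
    Commute w (siteAvg a x C) :=
  (Commute.sum_right _ _ _ fun k _ ↦
    commute_star_mul_mul (hw k) (star_uFactor_eq_or a k x) hC).smul_right _

theorem IsCAR.siteAvg_comm (hCAR : IsCAR a) (x y : Γ) (C : A) :
    siteAvg a x (siteAvg a y C) = siteAvg a y (siteAvg a x C) := by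
  rcases eq_or_ne x y with rfl | hxy
  · rfl
  simp only [siteAvg, Finset.mul_sum, Finset.sum_mul, mul_smul_comm, smul_mul_assoc,
    Finset.smul_sum, smul_smul]
  rw [Finset.sum_comm]
  refine Finset.sum_congr rfl fun j _ ↦ Finset.sum_congr rfl fun k _ ↦ ?_
  rw [star_mul_star_mul_mul_comm (hCAR.uFactor_commute_or_antiCommute hxy k j)]

theorem IsCAR.commutesAt_siteAvg (hCAR : IsCAR a) {x y : Γ} (h : y ≠ x) {C : A}
    (hC : CommutesAt a y C) : CommutesAt a y (siteAvg a x C) := by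
  have hsign := fun k ↦ hCAR.uFactor_commutesAt_or_antiCommutesAt h.symm k
  exact ⟨commute_siteAvg (fun k ↦ (hsign k).imp (·.1) (·.1)) hC.1,
    commute_siteAvg (fun k ↦ (hsign k).imp (·.2) (·.2)) hC.2⟩

theorem IsCAR.condExp_perm (hCAR : IsCAR a) {l₁ l₂ : List Γ} (h : l₁.Perm l₂) (B : A) :
    condExp a l₁ B = condExp a l₂ B := by
  induction h generalizing B with
  | nil => rfl
  | cons x _ ih => rw [condExp_cons, condExp_cons, ih]
  | swap x y l => rw [condExp_cons, condExp_cons, condExp_cons, condExp_cons, hCAR.siteAvg_comm]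
  | trans _ _ ih₁ ih₂ => rw [ih₁, ih₂]

theorem condExp_mul_right {l : List Γ} {B : A} (hB : ∀ x ∈ l, CommutesAt a x B) (C : A) :
    condExp a l (C * B) = condExp a l C * B := by
  induction l generalizing C with
  | nil => rw [condExp_nil, condExp_nil]
  | cons x l ih =>
    rw [condExp_cons, condExp_cons, siteAvg_mul_right (hB x List.mem_cons_self),
      ih fun y hy ↦ hB y (List.mem_cons_of_mem x hy)]

theorem condExp_mul_left {l : List Γ} {D : A} (hD : ∀ x ∈ l, CommutesAt a x D) (C : A) :
    condExp a l (D * C) = D * condExp a l C := by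
  induction l generalizing C with
  | nil => rw [condExp_nil, condExp_nil]
  | cons x l ih =>
    rw [condExp_cons, condExp_cons, siteAvg_mul_left (hD x List.mem_cons_self),
      ih fun y hy ↦ hD y (List.mem_cons_of_mem x hy)]

theorem IsCAR.commutesAt_condExp (hCAR : IsCAR a) {y : Γ} {l : List Γ} (hy : y ∉ l) {C : A}
    (hC : CommutesAt a y C) : CommutesAt a y (condExp a l C) := by
  induction l generalizing C with
  | nil => rwa [condExp_nil]
  | cons x l ih =>
    rw [condExp_cons]
    exact ih (List.not_mem_of_not_mem_cons hy)
      (hCAR.commutesAt_siteAvg (List.ne_of_not_mem_cons hy) hC)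

theorem IsCAR.condExp_append_mul (hCAR : IsCAR a) {l₁ l₂ : List Γ} (h : l₁.Disjoint l₂)
    {A₀ B₀ : A} (hA : ∀ y ∈ l₂, CommutesAt a y A₀) (hB : ∀ x ∈ l₁, CommutesAt a x B₀) :
    condExp a (l₁ ++ l₂) (A₀ * B₀) = condExp a l₁ A₀ * condExp a l₂ B₀ := by
  rw [condExp_append, condExp_mul_right hB, condExp_mul_left]
  exact fun y hy ↦ hCAR.commutesAt_condExp (fun hy' ↦ h hy' hy) (hA y hy)

theorem IsCAR.condExp_mul_of_disjoint [DecidableEq Γ] (hCAR : IsCAR a) {Y Z : Finset Γ}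
    {A₀ B₀ : A} (hA : A₀ ∈ carSpanEven a Z) (hB : B₀ ∈ carSpanEven a Y) {l l₁ l₂ : List Γ}
    (hl : l.Nodup) (hl₁ : l₁.Nodup) (hl₂ : l₂.Nodup)
    (hsplit : l.toFinset = l₁.toFinset ∪ l₂.toFinset) (h₁₂ : Disjoint l₁.toFinset l₂.toFinset)
    (h₁ : Disjoint l₁.toFinset Y) (h₂ : Disjoint l₂.toFinset Z) :
    condExp a l (A₀ * B₀) = condExp a l₁ A₀ * condExp a l₂ B₀ := by
  have h₁₂' := List.disjoint_toFinset_iff_disjoint.mp h₁₂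
  have hperm : l.Perm (l₁ ++ l₂) :=
    List.perm_of_nodup_nodup_toFinset_eq hl (hl₁.append hl₂ h₁₂')
      (by rw [hsplit, List.toFinset_append])
  rw [hCAR.condExp_perm hperm]
  refine hCAR.condExp_append_mul h₁₂' (fun y hy ↦ ?_) (fun x hx ↦ ?_)
  · exact hCAR.commutesAt_of_mem_carSpanEven
      (Finset.disjoint_left.mp h₂ (List.mem_toFinset.mpr hy)) hA
  · exact hCAR.commutesAt_of_mem_carSpanEven
      (Finset.disjoint_left.mp h₁ (List.mem_toFinset.mpr hx)) hB

end Averaging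

theorem condExp_product_property_general
    {Γ A : Type*} [DecidableEq Γ]
    [NormedRing A] [StarRing A] [NormedAlgebra ℂ A]
    (a : Γ → A) (hCAR : IsCAR a)
    (Λ X Y Z : Finset Γ) (hZY : Disjoint Z Y)
    -- enumerations of the relevant complements
    (lX : List Γ) (hlX : lX.Nodup) (hlXset : lX.toFinset = Λ \ X)
    (lXY : List Γ) (hlXY : lXY.Nodup) (hlXYset : lXY.toFinset = Λ \ (X ∪ Y))
    (lXYc : List Γ) (hlXYc : lXYc.Nodup) (hlXYcset : lXYc.toFinset = Λ \ (X ∪ (Λ \ Y)))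
    (lXZc : List Γ) (hlXZc : lXZc.Nodup) (hlXZcset : lXZc.toFinset = Λ \ (X ∪ (Λ \ Z)))
    (lXZ : List Γ) (hlXZ : lXZ.Nodup) (hlXZset : lXZ.toFinset = Λ \ (X ∪ Z))
    (A₀ B₀ : A) (hA : A₀ ∈ carSpanEven a Z) (hB : B₀ ∈ carSpanEven a Y) :
    condExp a lX (A₀ * B₀) = condExp a lXY A₀ * condExp a lXYc B₀ ∧
    condExp a lX (A₀ * B₀) = condExp a lXZc A₀ * condExp a lXZ B₀ := by
  refine ⟨hCAR.condExp_mul_of_disjoint hA hB hlX hlXY hlXYc ?_ ?_ ?_ ?_,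
    hCAR.condExp_mul_of_disjoint hA hB hlX hlXZc hlXZ ?_ ?_ ?_ ?_⟩ <;>
  simp only [hlXset, hlXYset, hlXYcset, hlXZcset, hlXZset, Finset.ext_iff, Finset.disjoint_left,
    Finset.mem_union, Finset.mem_sdiff] at hZY ⊢ <;>
  grind

/-- product property of the conditional expectations: for disjoint `Z, Y ⊆ Λ`
and even observables `A₀ ∈ 𝔄_Z⁺`, `B₀ ∈ 𝔄_Y⁺`,
`𝔼_X^Λ(A₀B₀) = 𝔼_{X∪Y}^Λ(A₀) · 𝔼_{X∪Yᶜ}^Λ(B₀) = 𝔼_{X∪Zᶜ}^Λ(A₀) · 𝔼_{X∪Z}^Λ(B₀)`,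
where `Yᶜ = Λ∖Y` and `Zᶜ = Λ∖Z`. -/
theorem condExp_product_property
    {Γ A : Type*} [DecidableEq Γ]
    [NormedRing A] [StarRing A] [CStarRing A] [NormedAlgebra ℂ A]
    (a : Γ → A) (hCAR : IsCAR a)
    (Λ X Y Z : Finset Γ) (hX : X ⊆ Λ) (hY : Y ⊆ Λ) (hZ : Z ⊆ Λ) (hZY : Disjoint Z Y)
    -- enumerations of the relevant complements
    (lX : List Γ) (hlX : lX.Nodup) (hlXset : lX.toFinset = Λ \ X)
    (lXY : List Γ) (hlXY : lXY.Nodup) (hlXYset : lXY.toFinset = Λ \ (X ∪ Y))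
    (lXYc : List Γ) (hlXYc : lXYc.Nodup) (hlXYcset : lXYc.toFinset = Λ \ (X ∪ (Λ \ Y)))
    (lXZc : List Γ) (hlXZc : lXZc.Nodup) (hlXZcset : lXZc.toFinset = Λ \ (X ∪ (Λ \ Z)))
    (lXZ : List Γ) (hlXZ : lXZ.Nodup) (hlXZset : lXZ.toFinset = Λ \ (X ∪ Z))
    (A₀ B₀ : A) (hA : A₀ ∈ carSpanEven a Z) (hB : B₀ ∈ carSpanEven a Y) :
    condExp a lX (A₀ * B₀) = condExp a lXY A₀ * condExp a lXYc B₀ ∧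
    condExp a lX (A₀ * B₀) = condExp a lXZc A₀ * condExp a lXZ B₀ :=
  condExp_product_property_general a hCAR Λ X Y Z hZY lX hlX hlXset lXY hlXY hlXYset lXYc hlXYc
    hlXYcset lXZc hlXZc hlXZcset lXZ hlXZ hlXZset A₀ B₀ hA hB
end

section
/- Weighted F-functions: let (Γ, d) be a countable metric space, F an F-function on (Γ, d) with constants ‖F‖ and C, and f : [0,∞) → [0,∞) a non-decreasing subadditive function (f(r+s) ≤ f(r) + f(s) for all r, s ≥ 0). Then F_f(r) := e^{−f(r)} F(r) is again an F-function on (Γ, d), with ‖F_f‖ ≤ ‖F‖ and convolution constant C_f ≤ C. -/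
/-!
The weight `e^{-f}` is at most `1`, so `F_f ≤ F` pointwise and the sums in (iv) are dominated
termwise by those of `F`. In the convolution ratio (v) the weights combine to
`e^{f(d(x,y)) - f(d(x,z)) - f(d(z,y))}`, which is at most `1` because `f` is non-decreasing and
subadditive and `d(x,y) ≤ d(x,z) + d(z,y)`.
-/

open Real

theorem summable_and_tsum_le_of_nonneg_of_le {ι : Type*} {g h : ι → ℝ} {c : ℝ}
    (hg : ∀ i, 0 ≤ g i) (hgh : ∀ i, g i ≤ h i) (hh : Summable h) (hc : ∑' i, h i ≤ c) :
    Summable g ∧ ∑' i, g i ≤ c :=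
  have hgs : Summable g := .of_nonneg_of_le hg hgh hh
  ⟨hgs, (hgs.tsum_le_tsum hgh hh).trans hc⟩

theorem exp_neg_mul_le_self {a b : ℝ} (ha : 0 ≤ a) (hb : 0 ≤ b) : exp (-a) * b ≤ b :=
  mul_le_of_le_one_left hb (exp_le_one_iff.2 (neg_nonpos.2 ha))

theorem exp_neg_mul_le_exp_neg_mul {a a' b b' : ℝ} (ha : a ≤ a') (hb : b' ≤ b) (hb' : 0 ≤ b') :
    exp (-a') * b' ≤ exp (-a) * b :=
  mul_le_mul (exp_le_exp.2 (neg_le_neg ha)) hb hb' (exp_pos _).le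

theorem exp_neg_mul_mul_exp_neg_mul_div_le {a b c A B D : ℝ} (habc : c ≤ a + b)
    (hABD : 0 ≤ A * B / D) :
    exp (-a) * A * (exp (-b) * B) / (exp (-c) * D) ≤ A * B / D := by
  have hsplit :
      exp (-a) * A * (exp (-b) * B) / (exp (-c) * D) = exp (c - (a + b)) * (A * B / D) := by
    rw [exp_sub, exp_add, exp_neg, exp_neg, exp_neg]
    field_simp
  rw [hsplit]
  exact mul_le_of_le_one_left hABD (exp_le_one_iff.2 (by linarith))

theorem weighted_F_function_general
    {Γ : Type*} [MetricSpace Γ]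
    (F : ℝ → ℝ)
    (hFpos : ∀ r, 0 ≤ r → 0 < F r)
    (hFmono : ∀ r s, 0 ≤ r → r ≤ s → F s ≤ F r)
    -- (iv) uniform integrability, with `‖F‖ = normF`
    (normF : ℝ)
    (hFsummable : ∀ x : Γ, Summable fun y : Γ => F (dist x y))
    (hFnorm : ∀ x : Γ, ∑' y : Γ, F (dist x y) ≤ normF)
    -- (v) the convolution condition, with constant `C`
    (C : ℝ)
    (hCsummable : ∀ x y : Γ,
      Summable fun z : Γ => F (dist x z) * F (dist z y) / F (dist x y))
    (hC : ∀ x y : Γ, ∑' z : Γ, F (dist x z) * F (dist z y) / F (dist x y) ≤ C)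
    -- the non-decreasing subadditive weight `f`
    (f : ℝ → ℝ)
    (hf0 : ∀ r, 0 ≤ r → 0 ≤ f r)
    (hfmono : ∀ r s, 0 ≤ r → r ≤ s → f r ≤ f s)
    (hfsub : ∀ r s, 0 ≤ r → 0 ≤ s → f (r + s) ≤ f r + f s) :
    letI Ff : ℝ → ℝ := fun r => Real.exp (-f r) * F r
    (∀ r, 0 ≤ r → 0 < Ff r) ∧
    (∀ r s, 0 ≤ r → r ≤ s → Ff s ≤ Ff r) ∧
    (∀ x : Γ, Summable (fun y : Γ => Ff (dist x y)) ∧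
      ∑' y : Γ, Ff (dist x y) ≤ normF) ∧
    (∀ x y : Γ, Summable (fun z : Γ => Ff (dist x z) * Ff (dist z y) / Ff (dist x y)) ∧
      ∑' z : Γ, Ff (dist x z) * Ff (dist z y) / Ff (dist x y) ≤ C) := by
  beta_reduce
  have hFfpos (r : ℝ) (hr : 0 ≤ r) : 0 < exp (-f r) * F r := mul_pos (exp_pos _) (hFpos r hr)
  have hf_triangle (x y z : Γ) : f (dist x y) ≤ f (dist x z) + f (dist z y) :=
    (hfmono _ _ dist_nonneg (dist_triangle x z y)).trans (hfsub _ _ dist_nonneg dist_nonneg)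
  refine ⟨hFfpos, fun r s hr hrs => ?_, fun x => ?_, fun x y => ?_⟩
  · exact exp_neg_mul_le_exp_neg_mul (hfmono r s hr hrs) (hFmono r s hr hrs)
      (hFpos s (hr.trans hrs)).le
  · exact summable_and_tsum_le_of_nonneg_of_le (fun y => (hFfpos _ dist_nonneg).le)
      (fun y => exp_neg_mul_le_self (hf0 _ dist_nonneg) (hFpos _ dist_nonneg).le)
      (hFsummable x) (hFnorm x)
  · exact summable_and_tsum_le_of_nonneg_of_le
      (fun z => div_nonneg (mul_nonneg (hFfpos _ dist_nonneg).le (hFfpos _ dist_nonneg).le)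
        (hFfpos _ dist_nonneg).le)
      (fun z => exp_neg_mul_mul_exp_neg_mul_div_le (hf_triangle x y z) <|
        div_nonneg (mul_nonneg (hFpos _ dist_nonneg).le (hFpos _ dist_nonneg).le)
          (hFpos _ dist_nonneg).le)
      (hCsummable x y) (hC x y)

/-- weighted F-functions: if `F` is an F-function on the countable metric
space `(Γ, d)` with constants `‖F‖` and `C`, and `f : [0,∞) → [0,∞)` is non-decreasing and
subadditive, then `F_f(r) = e^{−f(r)} F(r)` is again an F-function, with `‖F_f‖ ≤ ‖F‖` and
convolution constant `C_f ≤ C`. -/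
theorem weighted_F_function
    {Γ : Type*} [MetricSpace Γ] [Countable Γ]
    (F : ℝ → ℝ)
    (hFpos : ∀ r, 0 ≤ r → 0 < F r)
    (hFmono : ∀ r s, 0 ≤ r → r ≤ s → F s ≤ F r)
    -- (iv) uniform integrability, with `‖F‖ = normF`
    (normF : ℝ)
    (hFsummable : ∀ x : Γ, Summable fun y : Γ => F (dist x y))
    (hFnorm : ∀ x : Γ, ∑' y : Γ, F (dist x y) ≤ normF)
    -- (v) the convolution condition, with constant `C`
    (C : ℝ)
    (hCsummable : ∀ x y : Γ,
      Summable fun z : Γ => F (dist x z) * F (dist z y) / F (dist x y))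
    (hC : ∀ x y : Γ, ∑' z : Γ, F (dist x z) * F (dist z y) / F (dist x y) ≤ C)
    -- the non-decreasing subadditive weight `f`
    (f : ℝ → ℝ)
    (hf0 : ∀ r, 0 ≤ r → 0 ≤ f r)
    (hfmono : ∀ r s, 0 ≤ r → r ≤ s → f r ≤ f s)
    (hfsub : ∀ r s, 0 ≤ r → 0 ≤ s → f (r + s) ≤ f r + f s) :
    letI Ff : ℝ → ℝ := fun r => Real.exp (-f r) * F r
    (∀ r, 0 ≤ r → 0 < Ff r) ∧
    (∀ r s, 0 ≤ r → r ≤ s → Ff s ≤ Ff r) ∧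
    (∀ x : Γ, Summable (fun y : Γ => Ff (dist x y)) ∧
      ∑' y : Γ, Ff (dist x y) ≤ normF) ∧
    (∀ x y : Γ, Summable (fun z : Γ => Ff (dist x z) * Ff (dist z y) / Ff (dist x y)) ∧
      ∑' z : Γ, Ff (dist x z) * Ff (dist z y) / Ff (dist x y) ≤ C) :=
  weighted_F_function_general F hFpos hFmono normF hFsummable hFnorm C hCsummable hC f hf0 hfmono
    hfsub
end
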